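/- arXiv:2502.16128 — 8 statements merged into one kernel-verified Lean document; each statement's English description precedes it below -/
import Mathlib

section
/- For all real numbers p, q, n with 0 < p ≤ q < 1 and n ≥ 1, the binary Kullback–Leibler divergence satisfies kl(p/n, q/n) ≤ (1/n) · kl(p, q). -/
/-- Binary (Bernoulli) Kullback–Leibler divergence:
`kl(p,q) = p·log(p/q) + (1−p)·log((1−p)/(1−q))`. -/
noncomputable def klBin (p q : ℝ) : ℝ :=
  p * Real.log (p / q) + (1 - p) * Real.log ((1 - p) / (1 - q))

/-!
Scaling both arguments by `1/n` leaves the `p · log (p/q)` term of `kl` exactly scaled, and turns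
the other term into `(x + c) log ((x + c)/x)` at `x = n - q`, `c = q - p`. This quantity is the
perspective `x ↦ x f (1 + c/x)` of the convex function `f t = t log t`, and since `f 1 = 0` the
perspective is antitone in `x`; comparing `x = n - q` with `x = 1 - q` gives the inequality.
-/

open Real

theorem ConvexOn.mul_apply_add_div_le {s : Set ℝ} {f : ℝ → ℝ} (hf : ConvexOn ℝ s f)
    {a c x y : ℝ} (ha : a ∈ s) (hac : a + c / x ∈ s) (hx : 0 < x) (hxy : x ≤ y) :
    y * f (a + c / y) ≤ x * f (a + c / x) + (y - x) * f a := by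
  have hy : 0 < y := hx.trans_le hxy
  have hcomb : x / y * (a + c / x) + (y - x) / y * a = a + c / y := by
    field_simp
    ring
  have hconv := hf.2 hac ha (div_nonneg hx.le hy.le) (div_nonneg (sub_nonneg.2 hxy) hy.le)
    (by field_simp; ring : x / y + (y - x) / y = 1)
  simp only [smul_eq_mul, hcomb] at hconv
  calc y * f (a + c / y) ≤ y * (x / y * f (a + c / x) + (y - x) / y * f a) :=
        mul_le_mul_of_nonneg_left hconv hy.le
    _ = x * f (a + c / x) + (y - x) * f a := by field_simp

theorem add_mul_log_add_div_antitone {c x y : ℝ} (hc : 0 ≤ c) (hx : 0 < x) (hxy : x ≤ y) :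
    (y + c) * log ((y + c) / y) ≤ (x + c) * log ((x + c) / x) := by
  have hy : 0 < y := hx.trans_le hxy
  have key := convexOn_mul_log.mul_apply_add_div_le (a := 1) (c := c) (Set.mem_Ici.2 zero_le_one)
    (Set.mem_Ici.2 (by positivity)) hx hxy
  have perspective : ∀ z, 0 < z → z * ((1 + c / z) * log (1 + c / z)) =
      (z + c) * log ((z + c) / z) := fun z hz => by
    rw [show 1 + c / z = (z + c) / z by field_simp, ← mul_assoc, mul_div_cancel₀ _ hz.ne']
  simpa only [log_one, mul_zero, add_zero, perspective x hx, perspective y hy] using key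

theorem klBin_div_div (p q : ℝ) {n : ℝ} (hn : n ≠ 0) :
    klBin (p / n) (q / n) = 1 / n * (p * log (p / q) + (n - p) * log ((n - p) / (n - q))) := by
  have hdiv : (1 - p / n) / (1 - q / n) = (n - p) / (n - q) := by
    rw [one_sub_div hn, one_sub_div hn, div_div_div_cancel_right₀ hn]
  rw [klBin, div_div_div_cancel_right₀ hn, hdiv, one_sub_div hn]
  ring

theorem klBin_div_le_general (p q n : ℝ) (hpq : p ≤ q) (hq : q < 1) (hn : 1 ≤ n) :
    klBin (p / n) (q / n) ≤ (1 / n) * klBin p q := by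
  have htail := add_mul_log_add_div_antitone (sub_nonneg.2 hpq) (sub_pos.2 hq)
    (sub_le_sub_right hn q)
  simp only [sub_add_sub_cancel] at htail
  rw [klBin_div_div p q (by linarith), klBin]
  gcongr

/-- For all real `p, q, n` with `0 < p ≤ q < 1` and `n ≥ 1`,
`kl(p/n, q/n) ≤ (1/n) · kl(p, q)`. -/
theorem klBin_div_le (p q n : ℝ) (hp : 0 < p) (hpq : p ≤ q) (hq : q < 1) (hn : 1 ≤ n) :
    klBin (p / n) (q / n) ≤ (1 / n) * klBin p q :=
  klBin_div_le_general p q n hpq hq hn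
end

section
/- For all real numbers p, q, n with 0 < p ≤ q < 1 and n ≥ 1, one has ((1 − p/n)/(1 − q/n))^(n−p) ≤ ((1−p)/(1−q))^(1−p), where the exponents denote real powers. -/
/-!
With `x = n`, the left-hand side is `((n - p) / (n - q)) ^ (n - p)` and the right-hand side is the
same expression at `x = 1`, so it suffices that `x ↦ (x - p) * log ((x - p) / (x - q))` decreases
on `(q, ∞)`. Its derivative is `log z - (z - 1)` with `z = (x - p) / (x - q) > 0`, which is
nonpositive by `log z ≤ z - 1`.
-/

open Real Set

lemma hasDerivAt_sub_mul_log_sub_sub_log_sub {p q x : ℝ} (hp : x - p ≠ 0) (hq : x - q ≠ 0) :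
    HasDerivAt (fun x => (x - p) * (log (x - p) - log (x - q)))
      (log (x - p) - log (x - q) + (1 - (x - p) / (x - q))) x := by
  have hsub (c : ℝ) : HasDerivAt (fun x : ℝ => x - c) 1 x := (hasDerivAt_id x).sub_const c
  have hlog := ((hsub p).log hp).sub ((hsub q).log hq)
  refine ((hsub p).mul hlog).congr_deriv ?_
  simp only [Pi.sub_apply]
  field_simp

lemma antitoneOn_sub_mul_log_div_sub {p q : ℝ} (hpq : p ≤ q) :
    AntitoneOn (fun x => (x - p) * log ((x - p) / (x - q))) (Ioi q) := by
  have hpos {x : ℝ} (hx : x ∈ Ioi q) : 0 < x - p ∧ 0 < x - q := by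
    constructor <;> linarith [mem_Ioi.mp hx]
  have heq : EqOn (fun x => (x - p) * log ((x - p) / (x - q)))
      (fun x => (x - p) * (log (x - p) - log (x - q))) (Ioi q) := fun x hx => by
    obtain ⟨hxp, hxq⟩ := hpos hx
    simp only [log_div hxp.ne' hxq.ne']
  refine (antitoneOn_of_hasDerivWithinAt_nonpos (convex_Ioi q)
    (f' := fun x => log (x - p) - log (x - q) + (1 - (x - p) / (x - q))) ?_ (fun x hx => ?_)
    (fun x hx => ?_)).congr heq.symm
  · exact fun x hx => (hasDerivAt_sub_mul_log_sub_sub_log_sub (hpos hx).1.ne'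
      (hpos hx).2.ne').continuousAt.continuousWithinAt
  · rw [interior_Ioi] at hx
    exact (hasDerivAt_sub_mul_log_sub_sub_log_sub (hpos hx).1.ne'
      (hpos hx).2.ne').hasDerivWithinAt
  · rw [interior_Ioi] at hx
    obtain ⟨hxp, hxq⟩ := hpos hx
    rw [← log_div hxp.ne' hxq.ne']
    linarith [log_le_sub_one_of_pos (div_pos hxp hxq)]

lemma antitoneOn_div_sub_rpow_sub {p q : ℝ} (hpq : p ≤ q) :
    AntitoneOn (fun x => ((x - p) / (x - q)) ^ (x - p)) (Ioi q) := by
  intro x hx y hy hxy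
  have hbase {z : ℝ} (hz : z ∈ Ioi q) : 0 < (z - p) / (z - q) := by
    have := mem_Ioi.mp hz
    exact div_pos (by linarith) (by linarith)
  rw [← log_le_log_iff (rpow_pos_of_pos (hbase hy) _) (rpow_pos_of_pos (hbase hx) _),
    log_rpow (hbase hy), log_rpow (hbase hx)]
  exact antitoneOn_sub_mul_log_div_sub hpq hx hy hxy

theorem rpow_ratio_le_general (p q n : ℝ) (hpq : p ≤ q) (hq : q < 1) (hn : 1 ≤ n) :
    ((1 - p / n) / (1 - q / n)) ^ (n - p) ≤ ((1 - p) / (1 - q)) ^ (1 - p) := by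
  have hn0 : n ≠ 0 := by positivity
  have hratio : (1 - p / n) / (1 - q / n) = (n - p) / (n - q) := by
    field_simp
  rw [hratio]
  exact antitoneOn_div_sub_rpow_sub hpq hq (hq.trans_le hn) hn

/-- For all real `p, q, n` with `0 < p ≤ q < 1` and `n ≥ 1`,
`((1 − p/n)/(1 − q/n))^(n−p) ≤ ((1−p)/(1−q))^(1−p)` (real powers). -/
theorem rpow_ratio_le (p q n : ℝ) (hp : 0 < p) (hpq : p ≤ q) (hq : q < 1) (hn : 1 ≤ n) :
    ((1 - p / n) / (1 - q / n)) ^ (n - p) ≤ ((1 - p) / (1 - q)) ^ (1 - p) :=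
  rpow_ratio_le_general p q n hpq hq hn
end

section
/- For fixed real numbers p, q with 0 < p ≤ q < 1, the function n ↦ ((n − p)/(n − q))^(n − p) (real power) is antitone (non-increasing) on the interval [1, ∞). -/
/-! Taking logarithms, the claim is that `g x = (x - p) (log (x - p) - log (x - q))` decreases on
`(q, ∞)`. With `r = (x - p) / (x - q)` its derivative is `log r + 1 - r`, which is `≤ 0` by
`log r ≤ r - 1`. -/

open Real Set

section

variable {p q : ℝ}

theorem hasDerivAt_mul_log_sub_log {x : ℝ} (hp : 0 < x - p) (hq : 0 < x - q) :
    HasDerivAt (fun y => (y - p) * (log (y - p) - log (y - q)))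
      (log ((x - p) / (x - q)) + 1 - (x - p) / (x - q)) x := by
  have hlog_p : HasDerivAt (fun y => log (y - p)) (1 / (x - p)) x := by
    simpa using ((hasDerivAt_id x).sub_const p).log hp.ne'
  have hlog_q : HasDerivAt (fun y => log (y - q)) (1 / (x - q)) x := by
    simpa using ((hasDerivAt_id x).sub_const q).log hq.ne'
  refine (((hasDerivAt_id x).sub_const p).mul (hlog_p.sub hlog_q)).congr_deriv ?_
  simp only [Pi.sub_apply, id, log_div hp.ne' hq.ne']
  field_simp
  ring

theorem antitoneOn_mul_log_sub_log (hpq : p ≤ q) :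
    AntitoneOn (fun x => (x - p) * (log (x - p) - log (x - q))) (Ioi q) := by
  have hpos : ∀ x ∈ Ioi q, 0 < x - p ∧ 0 < x - q := fun x (hx : q < x) =>
    ⟨by linarith, by linarith⟩
  refine antitoneOn_of_hasDerivWithinAt_nonpos (convex_Ioi q)
    (f' := fun x => log ((x - p) / (x - q)) + 1 - (x - p) / (x - q))
    (fun x hx => (hasDerivAt_mul_log_sub_log (hpos x hx).1 (hpos x hx).2).continuousAt
      |>.continuousWithinAt) (fun x hx => ?_) (fun x hx => ?_)
  · rw [interior_Ioi] at hx
    exact (hasDerivAt_mul_log_sub_log (hpos x hx).1 (hpos x hx).2).hasDerivWithinAt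
  · rw [interior_Ioi] at hx
    have := log_le_sub_one_of_pos (div_pos (hpos x hx).1 (hpos x hx).2)
    linarith

theorem antitoneOn_div_rpow (hpq : p ≤ q) :
    AntitoneOn (fun x => ((x - p) / (x - q)) ^ (x - p)) (Ioi q) := by
  have hexp : EqOn (fun x => ((x - p) / (x - q)) ^ (x - p))
      (exp ∘ fun x => (x - p) * (log (x - p) - log (x - q))) (Ioi q) := by
    intro x (hx : q < x)
    have hp : 0 < x - p := by linarith
    have hq : 0 < x - q := by linarith
    simp only [Function.comp, rpow_def_of_pos (div_pos hp hq), log_div hp.ne' hq.ne', mul_comm]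
  exact (exp_monotone.comp_antitoneOn (antitoneOn_mul_log_sub_log hpq)).congr hexp.symm

end

theorem antitoneOn_rpow_ratio_general (p q : ℝ) (hpq : p ≤ q) (hq : q < 1) :
    AntitoneOn (fun n : ℝ => ((n - p) / (n - q)) ^ (n - p)) (Set.Ici 1) :=
  (antitoneOn_div_rpow hpq).mono (Ici_subset_Ioi.mpr hq)

/-- For fixed real `p, q` with `0 < p ≤ q < 1`, the function
`n ↦ ((n − p)/(n − q))^(n − p)` (real power) is antitone on `[1, ∞)`. -/
theorem antitoneOn_rpow_ratio (p q : ℝ) (hp : 0 < p) (hpq : p ≤ q) (hq : q < 1) :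
    AntitoneOn (fun n : ℝ => ((n - p) / (n - q)) ^ (n - p)) (Set.Ici 1) :=
  antitoneOn_rpow_ratio_general p q hpq hq
end

section
/- For all real numbers p, q, n with 0 < p ≤ q < 1 and n ≥ 1, one has (1 − p/n)·log((1 − p/n)/(1 − q/n)) ≤ (1/n)·(1 − p)·log((1−p)/(1−q)). -/
/-! Substituting `u = (y - d) / y` gives `y * log (y / (y - d)) = d * log u / (u - 1)`, and the
secant slope `log u / (u - 1)` of the concave function `log` through `1` decreases in `u`; hence
`y ↦ y * log (y / (y - d))` is antitone on `(d, ∞)`. The theorem compares this function at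
`y = 1 - p / n` and at `y = (1 - p) / n ≤ 1 - p / n`, with `d = (q - p) / n`. -/

open Real Set

theorem log_div_sub_one_le_of_le {u v : ℝ} (hu : 0 < u) (huv : u ≤ v) (hu1 : u ≠ 1)
    (hv1 : v ≠ 1) : log v / (v - 1) ≤ log u / (u - 1) := by
  have h := strictConcaveOn_log_Ioi.concaveOn.neg.secant_mono (a := 1) (mem_Ioi.2 one_pos) hu
    (mem_Ioi.2 (hu.trans_le huv)) hu1 hv1 huv
  simp only [Pi.neg_apply, log_one, neg_zero, sub_zero, neg_div] at h
  linarith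

theorem mul_log_div_sub_eq {d y : ℝ} (hd : 0 < d) (hy : d < y) :
    y * log (y / (y - d)) = d * (log ((y - d) / y) / ((y - d) / y - 1)) := by
  have hy0 : y ≠ 0 := (hd.trans hy).ne'
  rw [← inv_div, log_inv, div_sub_one hy0, sub_sub_cancel_left]
  field_simp

theorem antitoneOn_mul_log_div_sub {d : ℝ} (hd : 0 ≤ d) :
    AntitoneOn (fun y => y * log (y / (y - d))) (Ioi d) := by
  intro x hx y hy hxy
  simp only [mem_Ioi] at hx hy
  dsimp only
  rcases hd.eq_or_lt with rfl | hd
  · simp [div_self hx.ne', div_self hy.ne']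
  rw [mul_log_div_sub_eq hd hx, mul_log_div_sub_eq hd hy]
  refine mul_le_mul_of_nonneg_left (log_div_sub_one_le_of_le ?_ ?_ ?_ ?_) hd.le
  · exact div_pos (sub_pos.2 hx) (hd.trans hx)
  · rw [div_le_div_iff₀ (hd.trans hx) (hd.trans hy)]
    nlinarith
  · exact ((div_lt_one (hd.trans hx)).2 (by linarith)).ne
  · exact ((div_lt_one (hd.trans hy)).2 (by linarith)).ne

theorem one_sub_div_mul_log_le_general (p q n : ℝ) (hpq : p ≤ q) (hq : q < 1)
    (hn : 1 ≤ n) :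
    (1 - p / n) * Real.log ((1 - p / n) / (1 - q / n)) ≤
      (1 / n) * ((1 - p) * Real.log ((1 - p) / (1 - q))) := by
  have hn0 : 0 < n := one_pos.trans_le hn
  have hd : 0 ≤ (q - p) / n := div_nonneg (sub_nonneg.2 hpq) hn0.le
  have hx : (q - p) / n < (1 - p) / n := by gcongr
  have hxy : (1 - p) / n ≤ 1 - p / n := by
    rw [sub_div]
    gcongr
    rwa [div_le_one hn0]
  have h := antitoneOn_mul_log_div_sub hd hx (hx.trans_le hxy) hxy
  have hy_sub : 1 - p / n - (q - p) / n = 1 - q / n := by ring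
  have hx_div : (1 - p) / n / ((1 - p) / n - (q - p) / n) = (1 - p) / (1 - q) := by
    rw [← sub_div, div_div_div_cancel_right₀ hn0.ne', sub_sub_sub_cancel_right]
  simp only [hy_sub, hx_div] at h
  calc _ ≤ _ := h
    _ = _ := by ring

/-- For all real `p, q, n` with `0 < p ≤ q < 1` and `n ≥ 1`,
`(1 − p/n)·log((1 − p/n)/(1 − q/n)) ≤ (1/n)·(1 − p)·log((1−p)/(1−q))`. -/
theorem one_sub_div_mul_log_le (p q n : ℝ) (hp : 0 < p) (hpq : p ≤ q) (hq : q < 1)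
    (hn : 1 ≤ n) :
    (1 - p / n) * Real.log ((1 - p / n) / (1 - q / n)) ≤
      (1 / n) * ((1 - p) * Real.log ((1 - p) / (1 - q))) :=
  one_sub_div_mul_log_le_general p q n hpq hq hn
end

section
/- Fix a real sample count n > 0 and a threshold c ≥ 0. Then the kl-UCB index is monotone non-decreasing in the empirical mean: for all real numbers p₁, p₂ with 0 ≤ p₁ ≤ p₂ < 1, one has sup{q ∈ [p₁,1) : n·kl(p₁,q) ≤ c} ≤ sup{q ∈ [p₂,1) : n·kl(p₂,q) ≤ c}. -/
private noncomputable def klF (q p : ℝ) : ℝ :=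
  p * Real.log p + (1 - p) * Real.log (1 - p) - p * Real.log q - (1 - p) * Real.log (1 - q)

private lemma klBin_eq_klF {p q : ℝ} (hp : 0 ≤ p) (hp1 : p < 1) (hq : 0 < q) (hq1 : q < 1) :
    klBin p q = klF q p := by
  unfold klBin klF
  have h2 : Real.log ((1 - p) / (1 - q)) = Real.log (1 - p) - Real.log (1 - q) :=
    Real.log_div (by linarith) (by linarith)
  rcases eq_or_lt_of_le hp with h | h
  · simp [← h, h2]
  · rw [Real.log_div h.ne' hq.ne', h2]; ring

private lemma klF_anti {q : ℝ} (_hq : 0 < q) (hq1 : q < 1) :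
    AntitoneOn (klF q) (Set.Icc 0 q) := by
  apply antitoneOn_of_hasDerivWithinAt_nonpos (f' := fun p =>
      Real.log p - Real.log (1 - p) - Real.log q + Real.log (1 - q)) (convex_Icc 0 q)
  · -- continuity
    have h1 : ContinuousOn (fun p : ℝ => p * Real.log p) (Set.Icc 0 q) :=
      Real.continuous_mul_log.continuousOn
    have h2 : ContinuousOn (fun p : ℝ => (1 - p) * Real.log (1 - p)) (Set.Icc 0 q) :=
      (Real.continuous_mul_log.comp (continuous_const.sub continuous_id)).continuousOn
    exact ((h1.add h2).sub (continuousOn_id.mul continuousOn_const)).sub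
      ((continuousOn_const.sub continuousOn_id).mul continuousOn_const)
  · intro x hx
    rw [interior_Icc] at hx
    obtain ⟨hx0, hxq⟩ := hx
    have hx1 : x < 1 := lt_trans hxq hq1
    have H1 : HasDerivAt (fun p : ℝ => p * Real.log p) (Real.log x + 1) x :=
      Real.hasDerivAt_mul_log hx0.ne'
    have Hs : HasDerivAt (fun p : ℝ => 1 - p) (-1) x := by
      simpa using (hasDerivAt_id x).const_sub 1
    have H2 : HasDerivAt (fun p : ℝ => (1 - p) * Real.log (1 - p))
        ((Real.log (1 - x) + 1) * (-1)) x :=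
      (Real.hasDerivAt_mul_log (by linarith : (1 : ℝ) - x ≠ 0)).comp x Hs
    have H3 : HasDerivAt (fun p : ℝ => p * Real.log q) (Real.log q) x := by
      simpa using (hasDerivAt_id x).mul_const (Real.log q)
    have H4 : HasDerivAt (fun p : ℝ => (1 - p) * Real.log (1 - q))
        (-1 * Real.log (1 - q)) x := Hs.mul_const _
    have : HasDerivAt (klF q)
        ((Real.log x + 1) + (Real.log (1 - x) + 1) * (-1) - Real.log q
          - -1 * Real.log (1 - q)) x := ((H1.add H2).sub H3).sub H4
    have h := this
    have heq : (Real.log x + 1) + (Real.log (1 - x) + 1) * (-1) - Real.log q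
          - -1 * Real.log (1 - q)
        = Real.log x - Real.log (1 - x) - Real.log q + Real.log (1 - q) := by ring
    rw [heq] at h
    exact h.hasDerivWithinAt
  · intro x hx
    rw [interior_Icc] at hx
    obtain ⟨hx0, hxq⟩ := hx
    have h1 : Real.log x ≤ Real.log q := Real.log_le_log hx0 hxq.le
    have h2 : Real.log (1 - q) ≤ Real.log (1 - x) :=
      Real.log_le_log (by linarith) (by linarith)
    linarith

private lemma klBin_anti_left {p₁ p₂ q : ℝ} (hp₀ : 0 ≤ p₁) (h₁₂ : p₁ ≤ p₂) (hpq : p₂ ≤ q)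
    (hq1 : q < 1) : klBin p₂ q ≤ klBin p₁ q := by
  rcases eq_or_lt_of_le (le_trans (le_trans hp₀ h₁₂) hpq) with hq0 | hq0
  · -- q = 0, so p₁ = p₂ = 0
    have : p₁ = 0 := le_antisymm (by linarith) hp₀
    have : p₂ = 0 := le_antisymm (by linarith) (le_trans hp₀ h₁₂)
    simp_all
  · have hp₂1 : p₂ < 1 := lt_of_le_of_lt hpq hq1
    have hp₁1 : p₁ < 1 := lt_of_le_of_lt h₁₂ hp₂1
    rw [klBin_eq_klF hp₀ hp₁1 hq0 hq1,
      klBin_eq_klF (le_trans hp₀ h₁₂) hp₂1 hq0 hq1]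
    exact klF_anti hq0 hq1 ⟨hp₀, le_trans h₁₂ hpq⟩ ⟨le_trans hp₀ h₁₂, hpq⟩ h₁₂

/-- Fix a sample count `n > 0` and a threshold `c ≥ 0`. The kl-UCB index
`d(n, p, c) = sup {q ∈ [p,1) : n·kl(p,q) ≤ c}` is monotone non-decreasing in the
empirical mean: for `0 ≤ p₁ ≤ p₂ < 1`, `d(n, p₁, c) ≤ d(n, p₂, c)`. -/
theorem klUCB_mono_mean (n c : ℝ) (hn : 0 < n) (hc : 0 ≤ c)
    (p₁ p₂ : ℝ) (hp₀ : 0 ≤ p₁) (h₁₂ : p₁ ≤ p₂) (hp₂ : p₂ < 1) :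
    sSup {q : ℝ | q ∈ Set.Ico p₁ 1 ∧ n * klBin p₁ q ≤ c} ≤
      sSup {q : ℝ | q ∈ Set.Ico p₂ 1 ∧ n * klBin p₂ q ≤ c} := by
  set S₂ : Set ℝ := {q : ℝ | q ∈ Set.Ico p₂ 1 ∧ n * klBin p₂ q ≤ c} with hS₂
  have hklself : klBin p₂ p₂ = 0 := by
    unfold klBin
    rcases eq_or_lt_of_le (le_trans hp₀ h₁₂) with h | h
    · simp [← h]
    · rw [div_self h.ne', div_self (by linarith : (1:ℝ) - p₂ ≠ 0)]
      simp
  have hmem : p₂ ∈ S₂ := ⟨⟨le_refl _, hp₂⟩, by rw [hklself]; simpa using hc⟩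
  have hbdd : BddAbove S₂ := ⟨1, fun q hq => hq.1.2.le⟩
  have hle : p₂ ≤ sSup S₂ := le_csSup hbdd hmem
  apply Real.sSup_le _ (le_trans (le_trans hp₀ h₁₂) hle)
  rintro q ⟨⟨hq1, hq2⟩, hq3⟩
  rcases le_or_gt q p₂ with h | h
  · exact le_trans h hle
  · refine le_csSup hbdd ⟨⟨h.le, hq2⟩, ?_⟩
    have := klBin_anti_left hp₀ h₁₂ h.le hq2
    calc n * klBin p₂ q ≤ n * klBin p₁ q := by nlinarith
      _ ≤ c := hq3
end

section
/- (Multi-Level Agent Structure of the optimal matching.) Let g : Fin M → Fin K be a uniquely optimal matching. Then there exists a bijection e : Fin M ≃ Fin M such that for every i : Fin M, the number of arms k : Fin K with μ(e(i), k) > μ(e(i), g(e(i))) is at most (i : ℕ). Equivalently, there is an ordering of the agents m₁, …, m_M such that, for each i, agent m_i is matched under g to one of its i most-preferred arms. -/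
private lemma mlas_exists_better {M K : ℕ} (μ : Fin M → Fin K → ℝ) (g : Fin M → Fin K)
    (hg : Function.Injective g) (S : Finset (Fin M)) (m₀ : Fin M) (hm₀ : m₀ ∈ S)
    (k : Fin M → Fin K)
    (hk1 : ∀ m ∈ S, μ m (g m) < μ m (k m))
    (hk2 : ∀ m ∈ S, ∀ m', g m' = k m → m' ∈ S) :
    ∃ g' : Fin M → Fin K, Function.Injective g' ∧ g' ≠ g ∧
      ∑ m, μ m (g m) < ∑ m, μ m (g' m) := by
  classical
  haveI : Nonempty (Fin M) := ⟨m₀⟩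
  by_cases hA : ∃ m ∈ S, k m ∉ Set.range g
  · obtain ⟨m₁, hm₁S, hm₁⟩ := hA
    refine ⟨Function.update g m₁ (k m₁), ?_, ?_, ?_⟩
    · intro a b hab
      by_cases ha : a = m₁ <;> by_cases hb : b = m₁
      · rw [ha, hb]
      · subst ha
        rw [Function.update_self, Function.update_of_ne hb] at hab
        exact absurd ⟨b, hab.symm⟩ hm₁
      · subst hb
        rw [Function.update_self, Function.update_of_ne ha] at hab
        exact absurd ⟨a, hab⟩ hm₁
      · rw [Function.update_of_ne ha, Function.update_of_ne hb] at hab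
        exact hg hab
    · intro h
      have h1 : k m₁ = g m₁ := by
        have := congrFun h m₁
        rwa [Function.update_self] at this
      have h2 := hk1 m₁ hm₁S
      rw [h1] at h2
      exact lt_irrefl _ h2
    · refine Finset.sum_lt_sum ?_ ⟨m₁, Finset.mem_univ _, ?_⟩
      · intro m _
        by_cases hm : m = m₁
        · subst hm; rw [Function.update_self]; exact (hk1 m hm₁S).le
        · rw [Function.update_of_ne hm]
      · rw [Function.update_self]; exact hk1 m₁ hm₁S
  · push_neg at hA
    set f : Fin M → Fin M := fun m => Function.invFun g (k m) with hf
    have hgf : ∀ m ∈ S, g (f m) = k m := fun m hm => Function.invFun_eq (hA m hm)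
    have hfS : ∀ m ∈ S, f m ∈ S := fun m hm => hk2 m hm (f m) (hgf m hm)
    have hfne : ∀ m ∈ S, f m ≠ m := by
      intro m hm h
      have h1 := hgf m hm
      rw [h] at h1
      have h2 := hk1 m hm
      rw [← h1] at h2
      exact lt_irrefl _ h2
    have hiter : ∀ j, f^[j] m₀ ∈ S := by
      intro j; induction j with
      | zero => exact hm₀
      | succ n ih => rw [Function.iterate_succ_apply']; exact hfS _ ih
    obtain ⟨a, b, hab, heq⟩ := Finite.exists_ne_map_eq_of_infinite
      (fun j : ℕ => (⟨f^[j] m₀, hiter j⟩ : {m // m ∈ S}))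
    have heq' : f^[a] m₀ = f^[b] m₀ := congrArg Subtype.val heq
    clear heq
    wlog hlt : a < b generalizing a b
    · exact this b a hab.symm heq'.symm (by omega)
    set p := f^[a] m₀ with hp
    set n := b - a with hn
    have hn0 : 0 < n := by omega
    have hperiod : f^[n] p = p := by
      rw [hp, ← Function.iterate_add_apply, show n + a = b by omega, ← heq']
    set O : Set (Fin M) := {x | ∃ j, f^[j] p = x} with hO
    have hpO : p ∈ O := ⟨0, rfl⟩
    have hOS : ∀ x ∈ O, x ∈ S := by
      rintro x ⟨j, rfl⟩
      rw [hp, ← Function.iterate_add_apply]; exact hiter _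
    have hmaps : Set.MapsTo f O O := by
      rintro x ⟨j, rfl⟩
      exact ⟨j + 1, Function.iterate_succ_apply' f j p⟩
    have hsurj : Set.SurjOn f O O := by
      rintro x ⟨j, rfl⟩
      cases j with
      | zero =>
        refine ⟨f^[n-1] p, ⟨n-1, rfl⟩, ?_⟩
        show f (f^[n-1] p) = f^[0] p
        rw [← Function.iterate_succ_apply' f (n-1) p, show (n-1).succ = n by omega,
          hperiod, Function.iterate_zero_apply]
      | succ j =>
        exact ⟨f^[j] p, ⟨j, rfl⟩, (Function.iterate_succ_apply' f j p).symm⟩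
    have hinj : Set.InjOn f O :=
      (((Set.toFinite O).surjOn_iff_bijOn_of_mapsTo hmaps).mp hsurj).injOn
    set g' : Fin M → Fin K := fun x => if x ∈ O then g (f x) else g x with hg'
    have hg'def : ∀ x, g' x = if x ∈ O then g (f x) else g x := fun _ => rfl
    refine ⟨g', ?_, ?_, ?_⟩
    · intro x y hxy
      rw [hg'def, hg'def] at hxy
      by_cases hx : x ∈ O <;> by_cases hy : y ∈ O
      · rw [if_pos hx, if_pos hy] at hxy
        exact hinj hx hy (hg hxy)
      · rw [if_pos hx, if_neg hy] at hxy
        exact absurd (hg hxy ▸ hmaps hx) hy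
      · rw [if_neg hx, if_pos hy] at hxy
        exact absurd ((hg hxy).symm ▸ hmaps hy) hx
      · rw [if_neg hx, if_neg hy] at hxy
        exact hg hxy
    · intro h
      have h1 := congrFun h p
      rw [hg'def, if_pos hpO] at h1
      exact hfne p (hOS p hpO) (hg h1)
    · refine Finset.sum_lt_sum ?_ ⟨p, Finset.mem_univ _, ?_⟩
      · intro m _
        rw [hg'def]
        by_cases hm : m ∈ O
        · rw [if_pos hm, hgf m (hOS m hm)]; exact (hk1 m (hOS m hm)).le
        · rw [if_neg hm]
      · rw [hg'def, if_pos hpO, hgf p (hOS p hpO)]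
        exact hk1 p (hOS p hpO)

/-- **Multi-Level Agent Structure (MLAS) of the optimal matching.**
Let `g : Fin M → Fin K` be a uniquely optimal matching. Then there is a bijection
`e : Fin M ≃ Fin M` such that for every `i : Fin M`, the number of arms `k` with
`μ (e i) k > μ (e i) (g (e i))` is at most `i`: agent `e i` is matched under `g`
to one of its `i + 1` most-preferred arms. -/
theorem mlas_of_uniquely_optimal (M K : ℕ) (hMK : M ≤ K)
    (μ : Fin M → Fin K → ℝ) (g : Fin M → Fin K) (hg : Function.Injective g)
    (hopt : ∀ g' : Fin M → Fin K, Function.Injective g' → g' ≠ g →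
      ∑ m, μ m (g' m) < ∑ m, μ m (g m)) :
    ∃ e : Fin M ≃ Fin M, ∀ i : Fin M,
      Nat.card {k : Fin K // μ (e i) (g (e i)) < μ (e i) k} ≤ (i : ℕ) := by
  classical
  set L : Fin M → ℕ := fun m => Nat.card {k : Fin K // μ m (g m) < μ m k} with hL
  set e := Tuple.sort L with he
  refine ⟨e, fun i => ?_⟩
  by_contra hcon
  push_neg at hcon
  have hcon' : (i : ℕ) + 1 ≤ L (e i) := hcon
  set S : Finset (Fin M) := Finset.univ.filter (fun m => (i : ℕ) + 1 ≤ L m) with hS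
  have hmono : Monotone (L ∘ e) := Tuple.monotone_sort L
  have hSmem : e i ∈ S := by simp only [hS, Finset.mem_filter, Finset.mem_univ, true_and]; exact hcon'
  have hcompl : (Finset.univ \ S).card ≤ (i : ℕ) := by
    have hsub : Finset.univ \ S ⊆ (Finset.Iio i).image e := by
      intro m hm
      rw [Finset.mem_sdiff, hS, Finset.mem_filter] at hm
      have hm' : ¬ ((i : ℕ) + 1 ≤ L m) := fun h => hm.2 ⟨Finset.mem_univ _, h⟩
      obtain ⟨j, rfl⟩ : ∃ j, e j = m := ⟨e.symm m, e.apply_symm_apply m⟩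
      refine Finset.mem_image.mpr ⟨j, Finset.mem_Iio.mpr ?_, rfl⟩
      by_contra hj
      push_neg at hj
      exact hm' (le_trans hcon' (hmono hj))
    calc (Finset.univ \ S).card ≤ ((Finset.Iio i).image e).card := Finset.card_le_card hsub
      _ ≤ (Finset.Iio i).card := Finset.card_image_le
      _ = (i : ℕ) := Fin.card_Iio i
  have hex : ∀ m : Fin M, ∃ k : Fin K, m ∈ S →
      μ m (g m) < μ m k ∧ ∀ m', g m' = k → m' ∈ S := by
    intro m
    by_cases hm : m ∈ S
    · set B : Finset (Fin K) := Finset.univ.filter (fun k => μ m (g m) < μ m k) with hB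
      have hBcard : (i : ℕ) + 1 ≤ B.card := by
        have hLB : L m = B.card := by
          show Nat.card {k : Fin K // μ m (g m) < μ m k} = B.card
          rw [Nat.card_eq_fintype_card, Fintype.card_subtype]
        rw [← hLB]
        rw [hS, Finset.mem_filter] at hm
        exact hm.2
      have hIm : ((Finset.univ \ S).image g).card ≤ (i : ℕ) :=
        le_trans Finset.card_image_le hcompl
      have hne : (B \ (Finset.univ \ S).image g).Nonempty := by
        rw [← Finset.card_pos]
        have := Finset.le_card_sdiff ((Finset.univ \ S).image g) B
        omega
      obtain ⟨kk, hkk⟩ := hne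
      rw [Finset.mem_sdiff] at hkk
      refine ⟨kk, fun _ => ⟨?_, ?_⟩⟩
      · have h1 := hkk.1
        rw [hB, Finset.mem_filter] at h1
        exact h1.2
      · intro m' hm'
        by_contra hm'S
        exact hkk.2 (Finset.mem_image.mpr ⟨m', Finset.mem_sdiff.mpr ⟨Finset.mem_univ _, hm'S⟩, hm'⟩)
    · exact ⟨g m, fun h => absurd h hm⟩
  choose k hk using hex
  obtain ⟨g', hg'inj, hg'ne, hsum⟩ := mlas_exists_better μ g hg S (e i) hSmem k
    (fun m hm => (hk m hm).1) (fun m hm => (hk m hm).2)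
  exact absurd (hopt g' hg'inj hg'ne) (by linarith)
end

section
/- (Acyclicity of the preference graph of an optimal matching.) Let g : Fin M → Fin K be an injective map with maximal utility, i.e., U(g') ≤ U(g) for every injective g' : Fin M → Fin K. Then for every permutation σ of Fin M with σ ≠ id, there exists an agent m with σ(m) ≠ m such that μ(m, g(σ(m))) ≤ μ(m, g(m)); in other words, there is no nontrivial cyclic reassignment of matched arms in which every moved agent strictly improves. -/
/-- **Acyclicity of the preference graph of an optimal matching.**
Let `g : Fin M → Fin K` be injective with maximal utility. Then for every
permutation `σ ≠ id` of the agents, there is an agent `m` moved by `σ` that does not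
strictly improve by switching to the arm matched to `σ m`: no nontrivial cyclic
reassignment of matched arms strictly improves every moved agent. -/
theorem no_improving_cycle_of_optimal (M K : ℕ) (hMK : M ≤ K)
    (μ : Fin M → Fin K → ℝ) (g : Fin M → Fin K) (hg : Function.Injective g)
    (hopt : ∀ g' : Fin M → Fin K, Function.Injective g' →
      ∑ m, μ m (g' m) ≤ ∑ m, μ m (g m)) :
    ∀ σ : Equiv.Perm (Fin M), σ ≠ 1 →
      ∃ m : Fin M, σ m ≠ m ∧ μ m (g (σ m)) ≤ μ m (g m) := by
  intro σ hσ
  by_contra h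
  push_neg at h
  have hinj : Function.Injective (g ∘ σ) := hg.comp σ.injective
  have hle := hopt (g ∘ σ) hinj
  have hm : ∃ m : Fin M, σ m ≠ m := by
    by_contra hc
    push_neg at hc
    exact hσ (Equiv.ext fun x => hc x)
  obtain ⟨m₀, hm₀⟩ := hm
  have hlt : ∑ m, μ m (g m) < ∑ m, μ m ((g ∘ σ) m) := by
    apply Finset.sum_lt_sum
    · intro i _
      by_cases hi : σ i = i
      · simp [Function.comp, hi]
      · exact le_of_lt (h i hi)
    · exact ⟨m₀, Finset.mem_univ _, h m₀ hm₀⟩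
  exact absurd hle (not_le.mpr hlt)
end

section
/- Let g : Fin M → Fin K be a uniquely optimal matching and fix an agent m₀ : Fin M. Then the restriction of g to the remaining agents is itself a uniquely optimal matching of the agents {m : Fin M // m ≠ m₀} into the arms {k : Fin K // k ≠ g(m₀)}: every injective map h : {m // m ≠ m₀} → {k // k ≠ g(m₀)} that differs from the restriction of g satisfies ∑_{m ≠ m₀} μ(m, h(m)) < ∑_{m ≠ m₀} μ(m, g(m)). -/
lemma sum_split {M : ℕ} (m₀ : Fin M) (f : Fin M → ℝ) :
    ∑ m, f m = f m₀ + ∑ m : {m : Fin M // m ≠ m₀}, f m.1 := by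
  have : ∑ m : {m : Fin M // m ≠ m₀}, f m.1
      = ∑ m ∈ Finset.univ.erase m₀, f m := by
    rw [← Finset.sum_subtype (Finset.univ.erase m₀) (fun m => by simp) f]
  rw [this, Finset.add_sum_erase _ _ (Finset.mem_univ m₀)]

/-- Let `g : Fin M → Fin K` be a uniquely optimal matching and fix an agent `m₀`.
Then the restriction of `g` to the remaining agents is itself a uniquely optimal
matching of `{m // m ≠ m₀}` into `{k // k ≠ g m₀}`: every injective
`h : {m // m ≠ m₀} → {k // k ≠ g m₀}` differing from the restriction of `g` has
strictly smaller total utility. -/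
theorem restriction_uniquely_optimal (M K : ℕ) (hMK : M ≤ K)
    (μ : Fin M → Fin K → ℝ) (g : Fin M → Fin K) (hg : Function.Injective g)
    (hopt : ∀ g' : Fin M → Fin K, Function.Injective g' → g' ≠ g →
      ∑ m, μ m (g' m) < ∑ m, μ m (g m))
    (m₀ : Fin M) :
    ∀ h : {m : Fin M // m ≠ m₀} → {k : Fin K // k ≠ g m₀},
      Function.Injective h →
      h ≠ (fun m => ⟨g m.1, fun he => m.2 (hg he)⟩) →
      ∑ m : {m : Fin M // m ≠ m₀}, μ m.1 (h m).1 <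
        ∑ m : {m : Fin M // m ≠ m₀}, μ m.1 (g m.1) := by
  intro h hinj hne
  set g' : Fin M → Fin K := fun m =>
    if hm : m = m₀ then g m₀ else (h ⟨m, hm⟩).1 with hg'
  have hg'inj : Function.Injective g' := by
    intro a b hab
    simp only [hg'] at hab
    by_cases ha : a = m₀ <;> by_cases hb : b = m₀
    · rw [ha, hb]
    · simp [ha, hb] at hab
      exact absurd hab.symm (h ⟨b, hb⟩).2
    · simp [ha, hb] at hab
      exact absurd hab (h ⟨a, ha⟩).2
    · simp [ha, hb] at hab
      have := hinj (Subtype.ext hab)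
      exact congrArg Subtype.val this
  have hg'ne : g' ≠ g := by
    intro he
    apply hne
    funext m
    apply Subtype.ext
    have : g' m.1 = g m.1 := congrFun he m.1
    simpa [hg', m.2] using this
  have := hopt g' hg'inj hg'ne
  rw [sum_split m₀ (fun m => μ m (g' m)), sum_split m₀ (fun m => μ m (g m))] at this
  simp only [hg'] at this
  simp only [dif_pos trivial] at this
  have hrest : ∀ m : {m : Fin M // m ≠ m₀},
      μ m.1 (if hm : m.1 = m₀ then g m₀ else (h ⟨m.1, hm⟩).1) = μ m.1 (h m).1 := by
    intro m; simp [m.2]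
  rw [Finset.sum_congr rfl (fun m _ => hrest m)] at this
  linarith
end
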